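/- For real numbers λ₁,…,λₙ with H₁, H₂, …, H_r > 0 for some 1 < r ≤ n, the chain of Maclaurin inequalities holds: H₁ ≥ H₂^{1/2} ≥ H₃^{1/3} ≥ … ≥ H_r^{1/r}. -/

import Mathlib

/-- The `r`-th elementary symmetric polynomial of `v`. -/
noncomputable def esymm (n r : ℕ) (v : Fin n → ℝ) : ℝ :=
  ∑ s ∈ Finset.powersetCard r Finset.univ, ∏ i ∈ s, v i

/-- Normalized symmetric function `H_r = S_r / C(n,r)`. -/
noncomputable def Hsym (n r : ℕ) (v : Fin n → ℝ) : ℝ :=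
  esymm n r v / (n.choose r : ℝ)

/-!
Newton's inequalities `H_k * H_(k+2) ≤ H_(k+1) ^ 2` give the chain by induction on `j`, since
`H_0 = 1`. To prove them, one variable at a time is removed: for a multiset `s` of `m + 1` reals,
the derivative of `∏ (X - a)` has, by Rolle's theorem, `m` real roots, and these have the same
`H_j` for `j ≤ m`. With `k + 2` variables, the cofactors `B_i = ∏_{j ≠ i} λ_j` satisfy
`∑ B_i = S_(k+1)` and `∑_{i < i'} B_i B_i' = S_k S_(k+2)`, so Cauchy–Schwarz,
`(∑ B_i) ^ 2 ≤ (k + 2) ∑ B_i ^ 2`, is exactly Newton's inequality.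
-/

open Finset Polynomial

theorem sq_sum_eq_sum_sq_add_two_mul_esymm_two {ι R : Type*} [Fintype ι] [CommRing R]
    (v : ι → R) : (∑ i, v i) ^ 2 = ∑ i, v i ^ 2 + 2 * (univ.val.map v).esymm 2 := by
  have h := MvPolynomial.mul_esymm_eq_sum ι R 2
  rw [show {a ∈ antidiagonal 2 | a.1 < 2} = {(0, 2), (1, 1)} by decide,
    sum_pair (by decide), MvPolynomial.esymm_zero, MvPolynomial.esymm_one] at h
  have h' := congrArg (MvPolynomial.aeval v) h
  simp only [map_mul, map_add, map_pow, map_neg, map_one, map_sum, map_natCast,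
    MvPolynomial.aeval_X, MvPolynomial.aeval_esymm_eq_multiset_esymm, MvPolynomial.psum,
    pow_one] at h'
  linear_combination -h'

section Cofactors

variable {ι : Type*} [Fintype ι] [DecidableEq ι]

theorem sum_powersetCard_prod_compl {R : Type*} [CommSemiring R] (v : ι → R) {c : ℕ}
    (hc : c ≤ Fintype.card ι) :
    ∑ t ∈ powersetCard c univ, ∏ i ∈ tᶜ, v i = (univ.val.map v).esymm (Fintype.card ι - c) := by
  rw [esymm_map_val]
  refine sum_nbij' compl compl ?_ ?_ (fun _ _ ↦ compl_compl _) (fun _ _ ↦ compl_compl _)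
    (fun _ _ ↦ rfl) <;>
  · intro t ht
    rw [mem_powersetCard_univ] at ht ⊢
    rw [card_compl]
    omega

theorem prod_erase_mul_prod_erase {M : Type*} [CommMonoid M] (v : ι → M) {a b : ι}
    (hab : a ≠ b) :
    (∏ i ∈ univ.erase a, v i) * ∏ i ∈ univ.erase b, v i = (∏ i, v i) * ∏ i ∈ {a, b}ᶜ, v i := by
  have hrest : ({a, b}ᶜ : Finset ι) = (univ.erase a).erase b := by
    ext; simp [and_comm]
  rw [← mul_prod_erase univ v (mem_univ a), hrest,
    ← mul_prod_erase (univ.erase a) v (mem_erase.2 ⟨hab.symm, mem_univ b⟩),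
    ← mul_prod_erase (univ.erase b) v (mem_erase.2 ⟨hab, mem_univ a⟩), erase_right_comm]
  ac_rfl

theorem sum_powersetCard_two_prod_prod_erase {R : Type*} [CommSemiring R] (v : ι → R)
    (hι : 2 ≤ Fintype.card ι) :
    ∑ t ∈ powersetCard 2 univ, ∏ i ∈ t, ∏ j ∈ univ.erase i, v j =
      (∏ i, v i) * (univ.val.map v).esymm (Fintype.card ι - 2) := by
  rw [← sum_powersetCard_prod_compl v hι, mul_sum]
  refine sum_congr rfl fun t ht ↦ ?_
  obtain ⟨a, b, hab, rfl⟩ := card_eq_two.1 (mem_powersetCard_univ.1 ht)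
  rw [prod_pair hab, prod_erase_mul_prod_erase v hab]

theorem sum_prod_erase {R : Type*} [CommSemiring R] (v : ι → R) (hι : 1 ≤ Fintype.card ι) :
    ∑ i, ∏ j ∈ univ.erase i, v j = (univ.val.map v).esymm (Fintype.card ι - 1) := by
  rw [← sum_powersetCard_prod_compl v hι, powersetCard_one, sum_map]
  simp only [Function.Embedding.coeFn_mk, compl_singleton]

theorem two_mul_esymm_mul_prod_le {R : Type*} [CommRing R] [LinearOrder R]
    [IsStrictOrderedRing R] (v : ι → R) {k : ℕ} (hk : Fintype.card ι = k + 2) :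
    2 * (k + 2) * ((univ.val.map v).esymm k * ∏ i, v i) ≤
      (k + 1) * (univ.val.map v).esymm (k + 1) ^ 2 := by
  set cofactor : ι → R := fun i ↦ ∏ j ∈ univ.erase i, v j
  have hsum : ∑ i, cofactor i = (univ.val.map v).esymm (k + 1) := by
    simpa [hk] using sum_prod_erase v (by omega)
  have hpairs : (univ.val.map cofactor).esymm 2 = (∏ i, v i) * (univ.val.map v).esymm k := by
    simpa [hk, esymm_map_val] using sum_powersetCard_two_prod_prod_erase v (by omega)
  have hsq := sq_sum_eq_sum_sq_add_two_mul_esymm_two cofactor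
  have hcs : (∑ i, cofactor i) ^ 2 ≤ (k + 2) * ∑ i, cofactor i ^ 2 := by
    simpa [hk] using sq_sum_le_card_mul_sum_sq (s := univ) (f := cofactor)
  rw [hpairs, hsum] at hsq
  rw [hsum] at hcs
  linear_combination hcs - (k + 2) * hsq

end Cofactors

namespace Multiset

theorem esymm_card {R : Type*} [CommSemiring R] (s : Multiset R) :
    s.esymm (card s) = s.prod := by
  simp [esymm, powersetCard_self]

variable {R : Type*} [Field R]

noncomputable def esymmMean (s : Multiset R) (j : ℕ) : R :=
  s.esymm j / (card s).choose j

theorem esymmMean_mul_esymmMean_le_sq_of_card_eq [LinearOrder R] [IsStrictOrderedRing R]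
    {s : Multiset R} {k : ℕ} (hs : card s = k + 2) :
    s.esymmMean k * s.esymmMean (k + 2) ≤ s.esymmMean (k + 1) ^ 2 := by
  classical
  have key := two_mul_esymm_mul_prod_le (fun x : s ↦ (x : R)) (k := k) (by rw [card_coe, hs])
  rw [prod_eq_multiset_prod, map_univ_coe] at key
  have hchoose : ((k + 2).choose k : R) * 2 = (k + 2) * (k + 1) := by
    rw [Nat.choose_symm_add]
    exact_mod_cast (Nat.add_one_mul_choose_eq (k + 1) 1).symm.trans (by simp)
  rw [esymmMean, esymmMean, esymmMean, hs, ← hs, esymm_card, hs, Nat.choose_self,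
    Nat.choose_succ_self_right]
  have hpos : (0 : R) < (k + 2).choose k := by exact_mod_cast Nat.choose_pos (by omega)
  push_cast
  rw [div_one, div_mul_eq_mul_div, div_pow, div_le_div_iff₀ hpos (by positivity)]
  linear_combination (k + 2) / 2 * key - s.esymm (k + 1) ^ 2 / 2 * hchoose

theorem exists_derivative_prod_X_sub_C_eq (s : Multiset ℝ) {m : ℕ} (hs : card s = m + 1) :
    ∃ t : Multiset ℝ, card t = m ∧
      derivative (s.map (X - C ·)).prod = C ((m : ℝ) + 1) * (t.map (X - C ·)).prod := by
  set p := (s.map (X - C ·)).prod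
  have hdeg : p.natDegree = m + 1 := by rw [natDegree_multiset_prod_X_sub_C_eq_card, hs]
  have hderiv_deg : (derivative p).natDegree ≤ m :=
    (natDegree_derivative_le p).trans_eq (by rw [hdeg, Nat.add_sub_cancel])
  -- Rolle's theorem
  have hroots : m ≤ card (derivative p).roots := by
    have := card_roots_le_derivative p
    rw [roots_multiset_prod_X_sub_C, hs] at this
    omega
  have hcard : card (derivative p).roots = m :=
    le_antisymm ((card_roots' _).trans hderiv_deg) hroots
  have hsplit : card (derivative p).roots = (derivative p).natDegree :=
    le_antisymm (card_roots' _) (hderiv_deg.trans hroots)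
  have hlead : (derivative p).leadingCoeff = m + 1 := by
    rw [leadingCoeff, ← hsplit, hcard, coeff_derivative, ← hdeg,
      (monic_multiset_prod_of_monic _ _ fun a _ ↦ monic_X_sub_C a).coeff_natDegree, one_mul]
  refine ⟨(derivative p).roots, hcard, ?_⟩
  rw [← hlead, C_leadingCoeff_mul_prod_multiset_X_sub_C hsplit]

theorem exists_card_eq_esymmMean_eq (s : Multiset ℝ) {m : ℕ} (hs : card s = m + 1) :
    ∃ t : Multiset ℝ, card t = m ∧ ∀ j ≤ m, t.esymmMean j = s.esymmMean j := by
  obtain ⟨t, ht, hderiv⟩ := exists_derivative_prod_X_sub_C_eq s hs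
  refine ⟨t, ht, fun j hj ↦ ?_⟩
  have hcoeff := congrArg (coeff · (m - j)) hderiv
  simp only [coeff_derivative, coeff_C_mul] at hcoeff
  rw [prod_X_sub_C_coeff _ (by omega), prod_X_sub_C_coeff _ (by omega), hs, ht,
    show m - j + 1 = m + 1 - j by omega, show m + 1 - (m + 1 - j) = j by omega,
    show m - (m - j) = j by omega] at hcoeff
  have hes : s.esymm j * ((m + 1 - j : ℕ) : ℝ) = (m + 1) * t.esymm j := by
    refine mul_left_cancel₀ (pow_ne_zero j (neg_ne_zero.2 one_ne_zero) : (-1 : ℝ) ^ j ≠ 0) ?_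
    rw [show m + 1 - j = m - j + 1 by omega, Nat.cast_succ]
    linear_combination hcoeff
  have hchoose : (m.choose j : ℝ) * (m + 1) = (m + 1).choose j * ((m + 1 - j : ℕ) : ℝ) := by
    exact_mod_cast Nat.choose_mul_succ_eq m j
  rw [esymmMean, esymmMean, ht, hs, div_eq_div_iff (by exact_mod_cast (Nat.choose_pos hj).ne')
    (by exact_mod_cast (Nat.choose_pos (by omega)).ne')]
  refine mul_left_cancel₀ (by positivity : (m : ℝ) + 1 ≠ 0) ?_
  linear_combination -((m + 1).choose j : ℝ) * hes - s.esymm j * hchoose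

theorem esymmMean_mul_esymmMean_le_sq (s : Multiset ℝ) {k : ℕ} (hk : k + 2 ≤ card s) :
    s.esymmMean k * s.esymmMean (k + 2) ≤ s.esymmMean (k + 1) ^ 2 := by
  obtain ⟨d, hd⟩ := Nat.exists_eq_add_of_le hk
  induction d generalizing s with
  | zero => exact esymmMean_mul_esymmMean_le_sq_of_card_eq hd
  | succ d ih =>
    obtain ⟨t, ht, hmean⟩ := exists_card_eq_esymmMean_eq s (m := k + 2 + d) hd
    rw [← hmean k (by omega), ← hmean (k + 1) (by omega), ← hmean (k + 2) (by omega)]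
    exact ih t (by omega) ht

end Multiset

theorem pow_succ_le_pow_of_mul_le_sq {R : Type*} [CommSemiring R] [LinearOrder R]
    [IsStrictOrderedRing R] {a : ℕ → R} {r : ℕ} (h0 : a 0 = 1)
    (hpos : ∀ k, 1 ≤ k → k ≤ r → 0 < a k)
    (hconcave : ∀ k, k + 2 ≤ r → a k * a (k + 2) ≤ a (k + 1) ^ 2) :
    ∀ j < r, a (j + 1) ^ j ≤ a j ^ (j + 1) := by
  have hpos₀ : ∀ k ≤ r, 0 < a k := fun k hk ↦ by
    rcases k.eq_zero_or_pos with rfl | hk0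
    · exact h0 ▸ one_pos
    · exact hpos k hk0 hk
  intro j hj
  induction j with
  | zero => simp [h0]
  | succ j ih =>
    have hb := hpos₀ (j + 1) hj.le
    refine le_of_mul_le_mul_right ?_ (pow_pos hb j)
    calc a (j + 2) ^ (j + 1) * a (j + 1) ^ j
        ≤ a (j + 2) ^ (j + 1) * a j ^ (j + 1) := by
          gcongr
          · exact (pow_pos (hpos₀ (j + 2) hj) _).le
          · exact ih (by omega)
      _ = (a j * a (j + 2)) ^ (j + 1) := by ring
      _ ≤ (a (j + 1) ^ 2) ^ (j + 1) := by
          gcongr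
          · exact mul_nonneg (hpos₀ j (by omega)).le (hpos₀ (j + 2) hj).le
          · exact hconcave j hj
      _ = a (j + 1) ^ (j + 1 + 1) * a (j + 1) ^ j := by ring

theorem Real.rpow_one_div_succ_le_rpow_one_div {a b : ℝ} (ha : 0 ≤ a) (hb : 0 ≤ b) {j : ℕ}
    (hj : 1 ≤ j) (h : b ^ j ≤ a ^ (j + 1)) : b ^ ((1 : ℝ) / (j + 1)) ≤ a ^ ((1 : ℝ) / j) := by
  calc b ^ ((1 : ℝ) / (j + 1)) = (b ^ j) ^ ((1 : ℝ) / (j * (j + 1))) := by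
        rw [← Real.rpow_natCast, ← Real.rpow_mul hb]
        field_simp
    _ ≤ (a ^ (j + 1)) ^ ((1 : ℝ) / (j * (j + 1))) := by gcongr
    _ = a ^ ((1 : ℝ) / j) := by
        rw [← Real.rpow_natCast, ← Real.rpow_mul ha]
        push_cast
        field_simp

theorem Hsym_eq_esymmMean (n j : ℕ) (v : Fin n → ℝ) :
    Hsym n j v = (univ.val.map v).esymmMean j := by
  rw [Hsym, esymm, Multiset.esymmMean, esymm_map_val, Multiset.card_map, card_val, card_univ,
    Fintype.card_fin]

theorem maclaurin_chain_general (n r : ℕ) (hrn : r ≤ n) (lam : Fin n → ℝ)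
    (hpos : ∀ j : ℕ, 1 ≤ j → j ≤ r → 0 < Hsym n j lam) :
    ∀ j : ℕ, 1 ≤ j → j < r →
      Hsym n j lam ^ ((1 : ℝ) / j) ≥ Hsym n (j + 1) lam ^ ((1 : ℝ) / (j + 1)) := by
  have hnewton : ∀ k, k + 2 ≤ r →
      Hsym n k lam * Hsym n (k + 2) lam ≤ Hsym n (k + 1) lam ^ 2 := by
    intro k hk
    simp only [Hsym_eq_esymmMean]
    exact Multiset.esymmMean_mul_esymmMean_le_sq _ (by simpa using hk.trans hrn)
  have hpow := pow_succ_le_pow_of_mul_le_sq (by simp [Hsym, esymm]) hpos hnewton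
  intro j hj hjr
  exact Real.rpow_one_div_succ_le_rpow_one_div (hpos j hj hjr.le).le
    (hpos (j + 1) (by omega) hjr).le hj (hpow j hjr)

/-- Maclaurin chain of inequalities: if `H₁,…,H_r > 0` then
`H₁ ≥ H₂^{1/2} ≥ … ≥ H_r^{1/r}`. -/
theorem maclaurin_chain (n r : ℕ) (hr : 1 < r) (hrn : r ≤ n) (lam : Fin n → ℝ)
    (hpos : ∀ j : ℕ, 1 ≤ j → j ≤ r → 0 < Hsym n j lam) :
    ∀ j : ℕ, 1 ≤ j → j < r →
      Hsym n j lam ^ ((1 : ℝ) / j) ≥ Hsym n (j + 1) lam ^ ((1 : ℝ) / (j + 1)) :=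
  maclaurin_chain_general n r hrn lam hpos
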